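/- Let ~₁ and ~₂ be equivalence relations on a set X, each with all classes finite, and let ~ be the equivalence relation generated by ~₁ ∪ ~₂. If there is N such that every chain x₀ ~₁ x₁ ~₂ x₂ ~₁ ... of alternating relations with all steps nontrivial has length at most N, then every ~-class is finite. -/

import Mathlib

namespace Stmt19Aux

variable {X : Type*} (r₁ r₂ : X → X → Prop)

/-- Relation selected by parity. -/
def R (m : ℕ) : X → X → Prop := if m % 2 = 0 then r₁ else r₂

lemma R_congr {m₁ m₂ : ℕ} (h : m₁ % 2 = m₂ % 2) : R r₁ r₂ m₁ = R r₁ r₂ m₂ := by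
  unfold R; rw [h]

lemma R_equiv (h₁ : Equivalence r₁) (h₂ : Equivalence r₂) (m : ℕ) :
    Equivalence (R r₁ r₂ m) := by
  unfold R; split <;> assumption

/-- An alternating nontrivial chain condition, matching `hchain`'s hypothesis. -/
def Steps (b : Bool) (n : ℕ) (c : Fin (n + 1) → X) : Prop :=
  ∀ i : Fin n,
    (if (i.val + b.toNat) % 2 = 0 then r₁ else r₂) (c i.castSucc) (c i.succ) ∧
    c i.castSucc ≠ c i.succ

lemma steps_iff (b : Bool) (n : ℕ) (c : Fin (n + 1) → X) :
    Steps r₁ r₂ b n c ↔ ∀ i : Fin n,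
      R r₁ r₂ (i.val + b.toNat) (c i.castSucc) (c i.succ) ∧ c i.castSucc ≠ c i.succ :=
  Iff.rfl

def Reaches (x y : X) : Prop :=
  ∃ (b : Bool) (n : ℕ) (c : Fin (n + 1) → X),
    c 0 = x ∧ c (Fin.last n) = y ∧ Steps r₁ r₂ b n c

lemma reaches_refl (x : X) : Reaches r₁ r₂ x x :=
  ⟨false, 0, fun _ => x, rfl, rfl, fun i => i.elim0⟩

lemma reaches_extend (h₁ : Equivalence r₁) (h₂ : Equivalence r₂)
    {x y z : X} (m : ℕ) (hxy : Reaches r₁ r₂ x y) (hyz : R r₁ r₂ m y z) :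
    Reaches r₁ r₂ x z := by
  by_cases hne : y = z
  · exact hne ▸ hxy
  obtain ⟨b, n, c, h0, hl, hs⟩ := hxy
  rw [steps_iff] at hs
  rcases n with _ | n'
  · -- empty chain: start a fresh one with the right parity
    have hcy : c 0 = y := hl
    refine ⟨decide (m % 2 = 1), 1, Fin.snoc c z, ?_, ?_, ?_⟩
    · show (Fin.snoc c z : Fin 2 → X) ((0 : Fin 1).castSucc) = x
      rw [Fin.snoc_castSucc]; exact h0
    · exact Fin.snoc_last (α := fun _ => X) _ _
    · rw [steps_iff]
      intro i
      have hi : i = 0 := Subsingleton.elim _ _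
      subst hi
      have hcast : (Fin.snoc c z : Fin 2 → X) ((0 : Fin 1).castSucc) = c 0 := Fin.snoc_castSucc ..
      have hsucc : ((0 : Fin 1).succ) = Fin.last 1 := rfl
      have hpar : ((0 : Fin 1).val + (decide (m % 2 = 1)).toNat) % 2 = m % 2 := by
        rcases Nat.mod_two_eq_zero_or_one m with h | h <;> simp [h]
      rw [R_congr r₁ r₂ hpar, hcast, hsucc, Fin.snoc_last, hcy]
      exact ⟨hyz, hne⟩
  · -- nonempty chain
    by_cases hpar : (n' + 1 + b.toNat) % 2 = m % 2
    · -- parity matches: append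
      refine ⟨b, n' + 2, Fin.snoc c z, ?_, ?_, ?_⟩
      · show (Fin.snoc c z : Fin (n' + 3) → X) ((0 : Fin (n' + 2)).castSucc) = x
        rw [Fin.snoc_castSucc]; exact h0
      · simp [Fin.snoc_last]
      · rw [steps_iff]
        intro i
        induction i using Fin.lastCases with
        | last =>
          have e1 : (Fin.snoc c z : Fin (n' + 3) → X) ((Fin.last (n' + 1)).castSucc) = c (Fin.last (n' + 1)) :=
            Fin.snoc_castSucc ..
          have e2 : ((Fin.last (n' + 1)).succ : Fin (n' + 3)) = Fin.last (n' + 2) := rfl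
          rw [e1, e2, Fin.snoc_last, hl]
          have : R r₁ r₂ ((Fin.last (n' + 1)).val + b.toNat) = R r₁ r₂ m :=
            R_congr _ _ (by simpa using hpar)
          rw [this]
          exact ⟨hyz, hne⟩
        | cast j =>
          have e2 : ((j.castSucc : Fin (n' + 2)).succ : Fin (n' + 3)) = (j.succ).castSucc :=
            Fin.succ_castSucc j
          rw [show ((j.castSucc : Fin (n' + 2)).castSucc : Fin (n' + 3)) = (j.castSucc).castSucc
            from rfl, e2, Fin.snoc_castSucc, Fin.snoc_castSucc]
          simpa using hs j
    · -- parity mismatch: merge with the last step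
      have hpar' : (n' + b.toNat) % 2 = m % 2 := by omega
      have hlaststep := hs (Fin.last n')
      have hsval : ((Fin.last n').succ : Fin (n' + 2)) = Fin.last (n' + 1) := rfl
      rw [hsval, hl] at hlaststep
      have hwy : R r₁ r₂ m (c ((Fin.last n').castSucc)) y := by
        rw [← R_congr r₁ r₂ (show ((Fin.last n').val + b.toNat) % 2 = m % 2 by simpa using hpar')]
        exact hlaststep.1
      have hwz : R r₁ r₂ m (c ((Fin.last n').castSucc)) z :=
        (R_equiv r₁ r₂ h₁ h₂ m).trans hwy hyz
      by_cases hwz' : c ((Fin.last n').castSucc) = z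
      · -- drop the last step
        refine ⟨b, n', Fin.init c, ?_, ?_, ?_⟩
        · exact h0
        · exact hwz'
        · rw [steps_iff]
          intro i
          have e1 : Fin.init c i.castSucc = c (i.castSucc.castSucc) := rfl
          have e2 : Fin.init c i.succ = c (i.succ.castSucc) := rfl
          have e3 : (i.succ.castSucc : Fin (n' + 2)) = (i.castSucc).succ :=
            (Fin.succ_castSucc i).symm
          rw [e1, e2, e3]
          simpa using hs i.castSucc
      · -- replace the last entry by z
        refine ⟨b, n' + 1, Fin.snoc (Fin.init c) z, ?_, ?_, ?_⟩
        · show (Fin.snoc (Fin.init c) z : Fin (n' + 2) → X) ((0 : Fin (n' + 1)).castSucc) = x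
          rw [Fin.snoc_castSucc]
          exact h0
        · simp [Fin.snoc_last]
        · rw [steps_iff]
          intro i
          induction i using Fin.lastCases with
          | last =>
            have e1 : (Fin.snoc (Fin.init c) z : Fin (n' + 2) → X) ((Fin.last n').castSucc)
                = Fin.init c (Fin.last n') := Fin.snoc_castSucc ..
            have e2 : ((Fin.last n').succ : Fin (n' + 2)) = Fin.last (n' + 1) := rfl
            have e3 : Fin.init c (Fin.last n') = c ((Fin.last n').castSucc) := rfl
            rw [e1, e2, Fin.snoc_last, e3,
              R_congr r₁ r₂ (show ((Fin.last n').val + b.toNat) % 2 = m % 2 by simpa using hpar')]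
            exact ⟨hwz, hwz'⟩
          | cast j =>
            have e2 : ((j.castSucc : Fin (n' + 1)).succ : Fin (n' + 2)) = (j.succ).castSucc :=
              Fin.succ_castSucc j
            rw [show ((j.castSucc : Fin (n' + 1)).castSucc : Fin (n' + 2)) = (j.castSucc).castSucc
              from rfl, e2, Fin.snoc_castSucc, Fin.snoc_castSucc]
            have e3 : Fin.init c j.castSucc = c (j.castSucc.castSucc) := rfl
            have e4 : Fin.init c j.succ = c (j.succ.castSucc) := rfl
            have e5 : (j.succ.castSucc : Fin (n' + 2)) = (j.castSucc).succ :=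
              (Fin.succ_castSucc j).symm
            rw [e3, e4, e5]
            simpa using hs j.castSucc

end Stmt19Aux

/-- Let ~₁ and ~₂ be equivalence relations on X, each with all classes finite,
and let ~ be the equivalence relation generated by their union. If there is a
bound N such that every alternating chain x₀ ~₁ x₁ ~₂ x₂ ~₁ ⋯ (all steps
nontrivial, consecutive distinct relations, starting with either relation) has
length at most N, then every class of ~ is finite. -/
theorem stmt_19 (X : Type*) (r₁ r₂ : X → X → Prop)
    (h₁ : Equivalence r₁) (h₂ : Equivalence r₂)
    (hfin₁ : ∀ x : X, {y | r₁ x y}.Finite) (hfin₂ : ∀ x : X, {y | r₂ x y}.Finite)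
    (N : ℕ)
    (hchain : ∀ (b : Bool) (n : ℕ) (c : Fin (n + 1) → X),
      (∀ i : Fin n,
        (if (i.val + b.toNat) % 2 = 0 then r₁ else r₂) (c i.castSucc) (c i.succ) ∧
        c i.castSucc ≠ c i.succ) → n ≤ N) :
    ∀ x : X, {y | Relation.EqvGen (fun a b => r₁ a b ∨ r₂ a b) x y}.Finite := by
  intro x
  set s : X → X → Prop := fun a b => r₁ a b ∨ r₂ a b with hs_def
  have hsymm : Symmetric s := by
    intro a b h
    rcases h with h | h
    · exact Or.inl (h₁.symm h)
    · exact Or.inr (h₂.symm h)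
  -- Step 1: EqvGen s ≤ ReflTransGen s
  have step1 : ∀ y, Relation.EqvGen s x y → Relation.ReflTransGen s x y := by
    intro y h
    induction h with
    | rel a b h => exact Relation.ReflTransGen.single h
    | refl a => exact Relation.ReflTransGen.refl
    | symm a b _ ih => exact (@Relation.ReflTransGen.stdSymm _ s ⟨hsymm⟩).symm _ _ ih
    | trans a b c _ _ ih₁ ih₂ => exact ih₁.trans ih₂
  -- Step 2: ReflTransGen s → alternating chain
  have step2 : ∀ y, Relation.ReflTransGen s x y → Stmt19Aux.Reaches r₁ r₂ x y := by
    intro y h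
    induction h with
    | refl => exact Stmt19Aux.reaches_refl r₁ r₂ x
    | tail _ hbc ih =>
      rcases hbc with h | h
      · exact Stmt19Aux.reaches_extend r₁ r₂ h₁ h₂ 0 ih (by simpa [Stmt19Aux.R] using h)
      · exact Stmt19Aux.reaches_extend r₁ r₂ h₁ h₂ 1 ih (by simpa [Stmt19Aux.R] using h)
  -- The bounded reachable-set construction
  set f : Set X → Set X := fun S => ⋃ y ∈ S, ({z | r₁ y z} ∪ {z | r₂ y z}) with hf_def
  have hf_fin : ∀ n : ℕ, (f^[n] {x}).Finite := by
    intro n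
    induction n with
    | zero => simp only [Function.iterate_zero, id_eq]; exact Set.finite_singleton x
    | succ n ih =>
      rw [Function.iterate_succ_apply']
      exact Set.Finite.biUnion ih (fun y _ => (hfin₁ y).union (hfin₂ y))
  have hsub : ∀ S : Set X, S ⊆ f S := by
    intro S z hz
    exact Set.mem_biUnion hz (Or.inl (h₁.refl z))
  have hmono : ∀ n m : ℕ, n ≤ m → f^[n] {x} ⊆ f^[m] {x} := by
    intro n m hnm
    induction hnm with
    | refl => exact subset_rfl
    | step h ih =>
      refine ih.trans ?_
      rw [Function.iterate_succ_apply']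
      exact hsub _
  -- every chain endpoint lies in the iterate
  have hchain_mem : ∀ (b : Bool) (n : ℕ) (c : Fin (n + 1) → X),
      c 0 = x → Stmt19Aux.Steps r₁ r₂ b n c →
      ∀ k (hk : k < n + 1), c ⟨k, hk⟩ ∈ f^[k] {x} := by
    intro b n c h0 hs k
    induction k with
    | zero => intro hk; simpa using h0 ▸ (Set.mem_singleton x)
    | succ k ih =>
      intro hk
      have hk' : k < n + 1 := Nat.lt_of_succ_lt hk
      have hkn : k < n := Nat.lt_of_succ_lt_succ hk
      have hmem := ih hk'
      rw [Function.iterate_succ_apply']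
      have hstep := hs ⟨k, hkn⟩
      have e1 : (⟨k, hkn⟩ : Fin n).castSucc = ⟨k, hk'⟩ := rfl
      have e2 : (⟨k, hkn⟩ : Fin n).succ = ⟨k + 1, hk⟩ := rfl
      rw [e1, e2] at hstep
      refine Set.mem_biUnion hmem ?_
      rcases hstep with ⟨hrel, -⟩
      split at hrel
      · exact Or.inl hrel
      · exact Or.inr hrel
  -- conclude
  refine (hf_fin N).subset ?_
  intro y hy
  obtain ⟨b, n, c, h0, hl, hsteps⟩ := step2 y (step1 y hy)
  have hn : n ≤ N := hchain b n c hsteps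
  have : c (Fin.last n) ∈ f^[n] {x} := hchain_mem b n c h0 hsteps n (Nat.lt_succ_self n)
  exact hmono n N hn (hl ▸ this)
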